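/- If a point x lies in the interior of S₁ and, for every t ∈ [0,1], the displaced point τ_{2,1}(t)x lies in the interior of S₂, then the additive/subtractive topological sensitivity limit lim_{ε→0⁺} ε^{-d} ∫₀¹ μ^d(C(x,ε) ∩ τ_{1,2}(t)S₂) dt equals 1, where C(x,ε) is the open cube of side ε centered at x. -/

import Mathlib

/-!
Since `(t, y) ↦ τ_{2,1}(t) y` is jointly continuous and `[0,1]` is compact, the tube lemma gives a
neighbourhood of `x` that every `τ_{2,1}(t)` maps into `S₂`. Once the cube `C(x, ε)` lies in it,
`C(x, ε) ⊆ τ_{1,2}(t) S₂` for all `t`, so the integrand is `μ(C(x, ε)) = ε^d` and the quotient is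
exactly `1` for all small `ε`.
-/

open MeasureTheory Set Filter

variable {d : ℕ}

def cube {d : ℕ} (x : EuclideanSpace ℝ (Fin d)) (ε : ℝ) : Set (EuclideanSpace ℝ (Fin d)) :=
  {y | ∀ i : Fin d, y i ∈ Set.Ioo (x i - ε / 2) (x i + ε / 2)}

open Topology

lemma cube_eq_preimage_ball (x : EuclideanSpace ℝ (Fin d)) {ε : ℝ} (hε : 0 < ε) :
    cube x ε = WithLp.ofLp ⁻¹' Metric.ball (WithLp.ofLp x) (ε / 2) := by
  ext y
  simp only [cube, mem_ofPred_eq, mem_preimage, Metric.mem_ball, dist_pi_lt_iff (half_pos hε),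
    Real.dist_eq, mem_Ioo, abs_sub_lt_iff]
  exact forall_congr' fun i => by constructor <;> rintro ⟨h₁, h₂⟩ <;> constructor <;> linarith

lemma volume_cube (x : EuclideanSpace ℝ (Fin d)) {ε : ℝ} (hε : 0 < ε) :
    volume (cube x ε) = ENNReal.ofReal (ε ^ d) := by
  rw [cube_eq_preimage_ball x hε, (PiLp.volume_preserving_ofLp (Fin d)).measure_preimage
    measurableSet_ball.nullMeasurableSet, Real.volume_pi_ball _ (half_pos hε)]
  simp [mul_div_cancel₀ ε two_ne_zero]

lemma eventually_cube_subset {x : EuclideanSpace ℝ (Fin d)} {U : Set (EuclideanSpace ℝ (Fin d))}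
    (hU : U ∈ 𝓝 x) : ∀ᶠ ε in 𝓝[>] 0, cube x ε ⊆ U := by
  have hU' : WithLp.toLp 2 ⁻¹' U ∈ 𝓝 (WithLp.ofLp x) :=
    (PiLp.continuous_toLp 2 _).continuousAt.preimage_mem_nhds (by simpa using hU)
  obtain ⟨r, hr, hball⟩ := Metric.mem_nhds_iff.mp hU'
  filter_upwards [Ioo_mem_nhdsGT (mul_pos two_pos hr)] with ε hε
  rw [cube_eq_preimage_ball x hε.1]
  intro y hy
  simpa using hball (Metric.ball_subset_ball (by linarith [hε.2]) hy)

lemma eventually_forall_mem_of_continuous {T X Y : Type*} [TopologicalSpace T]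
    [TopologicalSpace X] [TopologicalSpace Y] {f : T × X → Y} (hf : Continuous f)
    {K : Set T} (hK : IsCompact K) {S : Set Y} {x : X} (hx : ∀ t ∈ K, f (t, x) ∈ interior S) :
    ∀ᶠ y in 𝓝 x, ∀ t ∈ K, f (t, y) ∈ S :=
  hK.eventually_forall_of_forall_eventually fun t ht =>
    Filter.Eventually.mono (f := 𝓝 (x, t))
      ((hf.comp continuous_swap).continuousAt.preimage_mem_nhds
        (isOpen_interior.mem_nhds (hx t ht))) fun _ hz => interior_subset hz

theorem topological_sensitivity_interior_general
    (S₂ : Set (EuclideanSpace ℝ (Fin d)))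
    (τ : ℝ → (EuclideanSpace ℝ (Fin d) ≃ᵢ EuclideanSpace ℝ (Fin d)))
    (hτ : Continuous fun p : ℝ × EuclideanSpace ℝ (Fin d) => (τ p.1).symm p.2)
    (x : EuclideanSpace ℝ (Fin d))
    (hx₂ : ∀ t ∈ Set.Icc (0:ℝ) 1, (τ t).symm x ∈ interior S₂) :
    Tendsto (fun ε : ℝ =>
        (∫⁻ t in Set.Icc (0:ℝ) 1, volume (cube x ε ∩ (τ t) '' S₂)) / ENNReal.ofReal (ε ^ d))
      (nhdsWithin 0 (Set.Ioi 0)) (nhds 1) := by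
  have hnear : ∀ᶠ y in 𝓝 x, ∀ t ∈ Icc (0:ℝ) 1, (τ t).symm y ∈ S₂ :=
    eventually_forall_mem_of_continuous hτ isCompact_Icc hx₂
  refine tendsto_const_nhds.congr' ?_
  filter_upwards [eventually_cube_subset hnear, self_mem_nhdsWithin] with ε hcube hε
  have hinter : ∀ t ∈ Icc (0:ℝ) 1, cube x ε ∩ τ t '' S₂ = cube x ε := fun t ht =>
    inter_eq_left.mpr fun y hy => by
      rw [← IsometryEquiv.preimage_symm]
      exact hcube hy t ht
  rw [setLIntegral_congr_fun measurableSet_Icc fun t ht => by rw [hinter t ht],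
    setLIntegral_const, Real.volume_Icc, volume_cube x hε]
  simp only [sub_zero, ENNReal.ofReal_one, mul_one]
  refine (ENNReal.div_self ?_ ENNReal.ofReal_ne_top).symm
  exact (ENNReal.ofReal_pos.mpr (pow_pos hε d)).ne'

/-- If `x` is interior to `S₁` and the displaced point `τ_{2,1}(t) x = τ_{1,2}(t)⁻¹ x`
is interior to `S₂` for every `t ∈ [0,1]`, then the topological sensitivity limit
`lim_{ε→0⁺} ε^{-d} ∫₀¹ μ(C(x,ε) ∩ τ_{1,2}(t) S₂) dt = 1`. -/
theorem topological_sensitivity_interior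
    (S₁ S₂ : Set (EuclideanSpace ℝ (Fin d)))
    (hS₂ : MeasurableSet S₂)
    (τ : ℝ → (EuclideanSpace ℝ (Fin d) ≃ᵢ EuclideanSpace ℝ (Fin d)))
    (hτ : Continuous fun p : ℝ × EuclideanSpace ℝ (Fin d) => (τ p.1).symm p.2)
    (hjoint : Measurable fun p : ℝ × EuclideanSpace ℝ (Fin d) =>
      Set.indicator S₂ (fun _ => (1 : ENNReal)) ((τ p.1).symm p.2))
    (x : EuclideanSpace ℝ (Fin d))
    (hx₁ : x ∈ interior S₁)
    (hx₂ : ∀ t ∈ Set.Icc (0:ℝ) 1, (τ t).symm x ∈ interior S₂) :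
    Tendsto (fun ε : ℝ =>
        (∫⁻ t in Set.Icc (0:ℝ) 1, volume (cube x ε ∩ (τ t) '' S₂)) / ENNReal.ofReal (ε ^ d))
      (nhdsWithin 0 (Set.Ioi 0)) (nhds 1) :=
  topological_sensitivity_interior_general S₂ τ hτ x hx₂
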